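/- arXiv:1908.09911 — 9 statements merged into one kernel-verified Lean document; each statement's English description precedes it below -/
import Mathlib

section
/- Let x_1, …, x_m be a regular spherical two-distance set of unit vectors in ℝ^n at angles α, β with multiplicities k_α, k_β, and suppose m ≥ n. Then 1 + k_α·α² + k_β·β² ≥ m/n, with equality if and only if x_1, …, x_m is a tight frame for ℝ^n (necessarily with frame bound m/n). -/
open scoped InnerProductSpace
open scoped Classical

/-- Frame-potential bound for a regular spherical two-distance set:
`1 + k_α α² + k_β β² ≥ m/n`, with equality iff the set is a tight frame
(necessarily with frame bound `m/n`). -/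
theorem stmt_1 {n m : ℕ} (hn : 0 < n) (hmn : n ≤ m)
    (x : Fin m → EuclideanSpace ℝ (Fin n)) (α β : ℝ) (kα kβ : ℕ)
    (hαβ : α ≠ β) (hα : α ∈ Set.Icc (-1 : ℝ) 1) (hβ : β ∈ Set.Icc (-1 : ℝ) 1)
    (hunit : ∀ i, ‖x i‖ = 1)
    (htwo : ∀ i j, i ≠ j → ⟪x i, x j⟫_ℝ = α ∨ ⟪x i, x j⟫_ℝ = β)
    (hregα : ∀ i, (Finset.univ.filter (fun j => j ≠ i ∧ ⟪x i, x j⟫_ℝ = α)).card = kα)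
    (hregβ : ∀ i, (Finset.univ.filter (fun j => j ≠ i ∧ ⟪x i, x j⟫_ℝ = β)).card = kβ) :
    1 + (kα : ℝ) * α ^ 2 + (kβ : ℝ) * β ^ 2 ≥ (m : ℝ) / n ∧
      (1 + (kα : ℝ) * α ^ 2 + (kβ : ℝ) * β ^ 2 = (m : ℝ) / n ↔
        ∀ v : EuclideanSpace ℝ (Fin n),
          ∑ i, ⟪v, x i⟫_ℝ ^ 2 = ((m : ℝ) / n) * ‖v‖ ^ 2) := by
  classical
  have hn' : (0:ℝ) < n := by exact_mod_cast hn
  have hm : 0 < m := lt_of_lt_of_le hn hmn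
  have hm' : (0:ℝ) < m := by exact_mod_cast hm
  set c : ℝ := (m:ℝ)/n with hc
  set T : Fin n → Fin n → ℝ := fun a b => ∑ i, x i a * x i b with hT
  have hinner : ∀ u v : EuclideanSpace ℝ (Fin n), ⟪u, v⟫_ℝ = ∑ a, u a * v a := by
    intro u v; simp [PiLp.inner_apply, RCLike.inner_apply, mul_comm]
  -- self inner
  have hself : ∀ i, ⟪x i, x i⟫_ℝ = 1 := by
    intro i; rw [real_inner_self_eq_norm_sq, hunit i]; norm_num
  -- row sums
  have hrow : ∀ i, ∑ j, ⟪x i, x j⟫_ℝ ^ 2 = 1 + (kα:ℝ) * α^2 + (kβ:ℝ) * β^2 := by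
    intro i
    set Aα := Finset.univ.filter (fun j => j ≠ i ∧ ⟪x i, x j⟫_ℝ = α) with hAα
    set Aβ := Finset.univ.filter (fun j => j ≠ i ∧ ⟪x i, x j⟫_ℝ = β) with hAβ
    have hd : Disjoint Aα Aβ := by
      rw [Finset.disjoint_left]
      intro j h1 h2
      rw [hAα, Finset.mem_filter] at h1
      rw [hAβ, Finset.mem_filter] at h2
      exact hαβ (h1.2.2 ▸ h2.2.2)
    have hunion : Aα ∪ Aβ = Finset.univ.erase i := by
      ext j
      simp only [hAα, hAβ, Finset.mem_union, Finset.mem_filter, Finset.mem_erase,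
        Finset.mem_univ, true_and, and_true]
      constructor
      · rintro (⟨h, _⟩ | ⟨h, _⟩) <;> exact h
      · intro h
        rcases htwo i j (Ne.symm h) with h2 | h2
        · exact Or.inl ⟨h, h2⟩
        · exact Or.inr ⟨h, h2⟩
    rw [← Finset.add_sum_erase _ _ (Finset.mem_univ i), hself i, ← hunion,
      Finset.sum_union hd]
    have hsα : ∑ j ∈ Aα, ⟪x i, x j⟫_ℝ ^ 2 = (kα:ℝ) * α^2 := by
      rw [Finset.sum_congr rfl (fun j hj => by
        rw [(Finset.mem_filter.mp hj).2.2]), Finset.sum_const, hregα i, nsmul_eq_mul]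
    have hsβ : ∑ j ∈ Aβ, ⟪x i, x j⟫_ℝ ^ 2 = (kβ:ℝ) * β^2 := by
      rw [Finset.sum_congr rfl (fun j hj => by
        rw [(Finset.mem_filter.mp hj).2.2]), Finset.sum_const, hregβ i, nsmul_eq_mul]
    rw [hsα, hsβ]; ring
  -- frame potential identity
  have hFP : ∑ i, ∑ j, ⟪x i, x j⟫_ℝ ^ 2 = ∑ p : Fin n × Fin n, (T p.1 p.2)^2 := by
    have h0 : ∑ i, ∑ j, ⟪x i, x j⟫_ℝ ^ 2 = ∑ q : Fin m × Fin m, ⟪x q.1, x q.2⟫_ℝ ^ 2 :=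
      (Fintype.sum_prod_type' (f := fun i j => ⟪x i, x j⟫_ℝ ^ 2)).symm
    rw [h0]
    have h1 : ∀ q : Fin m × Fin m, ⟪x q.1, x q.2⟫_ℝ ^ 2
        = ∑ p : Fin n × Fin n, (x q.1 p.1 * x q.1 p.2) * (x q.2 p.1 * x q.2 p.2) := by
      intro q
      rw [hinner, pow_two, Finset.sum_mul_sum,
        ← Fintype.sum_prod_type' (f := fun a b => x q.1 a * x q.2 a * (x q.1 b * x q.2 b))]
      exact Finset.sum_congr rfl (fun p _ => by ring)
    simp only [h1]
    rw [Finset.sum_comm]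
    refine Finset.sum_congr rfl (fun p _ => ?_)
    rw [pow_two, hT, Finset.sum_mul_sum,
      ← Fintype.sum_prod_type' (f := fun i j => x i p.1 * x i p.2 * (x j p.1 * x j p.2))]
  have hFPval : ∑ p : Fin n × Fin n, (T p.1 p.2)^2
      = m * (1 + (kα:ℝ) * α^2 + (kβ:ℝ) * β^2) := by
    rw [← hFP]
    simp only [hrow]
    rw [Finset.sum_const, Finset.card_univ, Fintype.card_fin, nsmul_eq_mul]
  -- trace
  have htr : ∑ a, T a a = (m:ℝ) := by
    rw [hT]
    rw [Finset.sum_comm]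
    have : ∀ i, ∑ a, x i a * x i a = 1 := by
      intro i
      rw [← hinner, hself i]
    simp only [this]
    rw [Finset.sum_const, Finset.card_univ, Fintype.card_fin, nsmul_eq_mul, mul_one]
  -- error term
  set E : ℝ := ∑ p : Fin n × Fin n, (T p.1 p.2 - if p.1 = p.2 then c else 0)^2 with hE
  have hEnn : 0 ≤ E := Finset.sum_nonneg (fun p _ => sq_nonneg _)
  have hEeq : ∑ p : Fin n × Fin n, (T p.1 p.2)^2 = (m:ℝ)^2/n + E := by
    have h2 : ∀ a b : Fin n, (T a b - if a = b then c else 0)^2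
        = (T a b)^2 - (if a = b then 2*c*(T a b) else 0) + (if a = b then c^2 else 0) := by
      intro a b; by_cases h : a = b <;> simp [h] <;> ring
    have hEval : E = (∑ p : Fin n × Fin n, (T p.1 p.2)^2) - 2*c*(m:ℝ) + c^2 * n := by
      rw [hE, Fintype.sum_prod_type' (f := fun a b => (T a b - if a = b then c else 0)^2),
        Fintype.sum_prod_type' (f := fun a b => (T a b)^2)]
      simp only [h2, Finset.sum_add_distrib, Finset.sum_sub_distrib,
        Finset.sum_ite_eq, Finset.mem_univ, if_true]
      rw [← Finset.mul_sum, htr]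
      rw [Finset.sum_const, Finset.card_univ, Fintype.card_fin, nsmul_eq_mul]
      ring
    rw [hEval, hc]
    field_simp
    ring
  -- equality chain: m * K = m^2/n + E
  have hmain : (m:ℝ) * (1 + (kα:ℝ) * α^2 + (kβ:ℝ) * β^2) = (m:ℝ)^2/n + E := by
    rw [← hFPval, hEeq]
  have hexpr : 1 + (kα:ℝ) * α ^ 2 + (kβ:ℝ) * β ^ 2 = (m:ℝ)/n + E/m := by
    have h2 : (m:ℝ) * ((m:ℝ)/n + E/m) = (m:ℝ)^2/n + E := by
      field_simp
    exact mul_left_cancel₀ (ne_of_gt hm') (hmain.trans h2.symm)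
  have hEm : 0 ≤ E / m := div_nonneg hEnn hm'.le
  -- inequality
  have hineq : 1 + (kα:ℝ) * α ^ 2 + (kβ:ℝ) * β ^ 2 ≥ (m:ℝ) / n := by
    rw [hexpr]; linarith
  refine ⟨hineq, ?_⟩
  -- equality iff E = 0
  have heqE : 1 + (kα:ℝ) * α ^ 2 + (kβ:ℝ) * β ^ 2 = (m:ℝ) / n ↔ E = 0 := by
    rw [hexpr]
    constructor
    · intro h
      have hEm0 : E / m = 0 := by linarith
      rcases div_eq_zero_iff.mp hEm0 with h' | h'
      · exact h'
      · exact absurd h' (ne_of_gt hm')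
    · intro h
      rw [h]
      simp
  -- E = 0 iff T = c I
  have hE0 : E = 0 ↔ ∀ a b : Fin n, T a b = if a = b then c else 0 := by
    rw [hE, Finset.sum_eq_zero_iff_of_nonneg (fun p _ => sq_nonneg _)]
    constructor
    · intro h a b
      have := h (a, b) (Finset.mem_univ _)
      simpa [sub_eq_zero] using pow_eq_zero_iff (n := 2) (by norm_num) |>.mp this
    · intro h p _
      rw [h p.1 p.2]
      simp
  -- tight frame iff T = c I
  have hsw : ∀ v : EuclideanSpace ℝ (Fin n),
      ∑ i, ⟪v, x i⟫_ℝ ^ 2 = ∑ p : Fin n × Fin n, v p.1 * v p.2 * T p.1 p.2 := by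
    intro v
    have h1 : ∀ i, ⟪v, x i⟫_ℝ ^ 2
        = ∑ p : Fin n × Fin n, v p.1 * v p.2 * (x i p.1 * x i p.2) := by
      intro i
      rw [hinner, pow_two, Finset.sum_mul_sum,
        ← Fintype.sum_prod_type' (f := fun a b => v a * x i a * (v b * x i b))]
      exact Finset.sum_congr rfl (fun p _ => by ring)
    simp only [h1]
    rw [Finset.sum_comm]
    exact Finset.sum_congr rfl (fun p _ => by rw [hT, Finset.mul_sum])
  have hnormsq : ∀ v : EuclideanSpace ℝ (Fin n), ‖v‖^2 = ∑ a, v a * v a := by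
    intro v; rw [← real_inner_self_eq_norm_sq, hinner]
  have htight : (∀ a b : Fin n, T a b = if a = b then c else 0) ↔
      (∀ v : EuclideanSpace ℝ (Fin n), ∑ i, ⟪v, x i⟫_ℝ ^ 2 = c * ‖v‖ ^ 2) := by
    constructor
    · intro h v
      rw [hsw v]
      have key : ∀ p : Fin n × Fin n, v p.1 * v p.2 * T p.1 p.2
          = if p.1 = p.2 then c * (v p.1 * v p.2) else 0 := by
        intro p
        rw [h p.1 p.2]
        by_cases hp : p.1 = p.2 <;> simp [hp] <;> ring
      rw [Finset.sum_congr rfl (fun p _ => key p),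
        Fintype.sum_prod_type' (f := fun a b => if a = b then c * (v a * v b) else 0)]
      simp only [Finset.sum_ite_eq, Finset.mem_univ, if_true]
      rw [hnormsq, Finset.mul_sum]
    · intro h a b
      have hsymm : T a b = T b a := by
        rw [hT]; exact Finset.sum_congr rfl (fun i _ => mul_comm _ _)
      have hdiag : ∀ d : Fin n, T d d = c := by
        intro d
        have h0 := h (EuclideanSpace.single d (1:ℝ))
        have h1 : ∀ i, ⟪(EuclideanSpace.single d (1:ℝ) : EuclideanSpace ℝ (Fin n)), x i⟫_ℝ
            = x i d := by
          intro i; simp [EuclideanSpace.inner_single_left]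
        simp only [h1] at h0
        rw [EuclideanSpace.norm_single] at h0
        have h2 : ∑ i, (x i d)^2 = T d d := by
          rw [hT]; exact Finset.sum_congr rfl fun i _ => by ring
        rw [h2] at h0
        simpa using h0
      by_cases hab : a = b
      · subst hab; simp [hdiag a]
      · simp only [if_neg hab]
        set v : EuclideanSpace ℝ (Fin n) :=
          EuclideanSpace.single a (1:ℝ) + EuclideanSpace.single b (1:ℝ) with hv
        have h0 := h v
        have h1 : ∀ i, ⟪v, x i⟫_ℝ = x i a + x i b := by
          intro i; rw [hv, inner_add_left]; simp [EuclideanSpace.inner_single_left]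
        have hnv : ‖v‖^2 = 2 := by
          rw [← real_inner_self_eq_norm_sq, hv]
          rw [inner_add_left, inner_add_right, inner_add_right]
          simp [inner_add_left, inner_add_right, EuclideanSpace.inner_single_left,
            EuclideanSpace.single_apply, hab, Ne.symm hab]
          norm_num
        simp only [h1, hnv] at h0
        have h2 : ∑ i, (x i a + x i b)^2 = T a a + 2 * T a b + T b b := by
          simp only [hT]
          rw [Finset.mul_sum, ← Finset.sum_add_distrib, ← Finset.sum_add_distrib]
          exact Finset.sum_congr rfl fun i _ => by ring
        rw [h2] at h0
        have hda := hdiag a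
        have hdb := hdiag b
        linarith
  rw [heqE, hE0]
  exact htight
end

section
/- Let x_1, …, x_m be nonzero vectors in ℝ^n such that ⟨x_i, x_j⟩ < 0 for all i ≠ j. Then m ≤ n + 1. -/
open scoped InnerProductSpace
open Finset

private lemma li_aux {n k : ℕ} (x : Fin (k + 1) → EuclideanSpace ℝ (Fin n))
    (h : ∀ i j, i ≠ j → ⟪x i, x j⟫_ℝ < 0) :
    LinearIndependent ℝ (fun i : Fin k => x i.castSucc) := by
  rw [Fintype.linearIndependent_iff]
  intro g hg
  set S : Finset (Fin k) := univ.filter (fun i => 0 < g i) with hS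
  set p : EuclideanSpace ℝ (Fin n) := ∑ i ∈ S, g i • x i.castSucc with hp
  set q : EuclideanSpace ℝ (Fin n) := ∑ i ∈ Sᶜ, (-g i) • x i.castSucc with hq
  have hne : ∀ i : Fin k, i.castSucc ≠ Fin.last k := fun i => (Fin.castSucc_lt_last i).ne
  have hpq : p = q := by
    have h0 : p - q = 0 := by
      rw [hp, hq]
      simp only [neg_smul, Finset.sum_neg_distrib, sub_neg_eq_add,
        Finset.sum_add_sum_compl]
      exact hg
    exact sub_eq_zero.mp h0
  -- ⟪p, q⟫ ≤ 0
  have hinner : ⟪p, q⟫_ℝ ≤ 0 := by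
    rw [hp, hq, sum_inner]
    apply Finset.sum_nonpos
    intro i hi
    rw [inner_sum]
    apply Finset.sum_nonpos
    intro j hj
    rw [real_inner_smul_left, real_inner_smul_right]
    have hgi : 0 < g i := (Finset.mem_filter.mp hi).2
    have hgj : g j ≤ 0 := by
      have := Finset.mem_compl.mp hj
      simp only [hS, Finset.mem_filter, Finset.mem_univ, true_and, not_lt] at this
      exact this
    have hij : i ≠ j := by
      rintro rfl; exact absurd hi (Finset.mem_compl.mp hj)
    have hxij : ⟪x i.castSucc, x j.castSucc⟫_ℝ < 0 :=
      h _ _ (by simpa using hij)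
    have : 0 ≤ g i * -g j := mul_nonneg hgi.le (by linarith)
    nlinarith
  have hp0 : p = 0 := by
    have : ‖p‖ ^ 2 ≤ 0 := by
      rw [← real_inner_self_eq_norm_sq]
      calc ⟪p, p⟫_ℝ = ⟪p, q⟫_ℝ := by rw [hpq]
        _ ≤ 0 := hinner
    have := sq_nonneg ‖p‖
    have hn : ‖p‖ = 0 := by nlinarith
    exact norm_eq_zero.mp hn
  -- inner with x (last k) kills positive part
  have hSempty : ∀ i ∈ S, g i = 0 := by
    intro i hi
    exfalso
    have hz : ⟪p, x (Fin.last k)⟫_ℝ = 0 := by rw [hp0, inner_zero_left]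
    rw [hp, sum_inner] at hz
    have hlt : ∑ i ∈ S, ⟪g i • x i.castSucc, x (Fin.last k)⟫_ℝ < 0 := by
      apply Finset.sum_neg
      · intro j hj
        rw [real_inner_smul_left]
        have hgj : 0 < g j := (Finset.mem_filter.mp hj).2
        exact mul_neg_of_pos_of_neg hgj (h _ _ (hne j))
      · exact ⟨i, hi⟩
    linarith
  -- now all g i ≤ 0; use total sum again
  have hz : ⟪∑ i, g i • x i.castSucc, x (Fin.last k)⟫_ℝ = 0 := by
    rw [hg, inner_zero_left]
  rw [sum_inner] at hz
  have hnonneg : ∀ i ∈ (univ : Finset (Fin k)),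
      0 ≤ ⟪g i • x i.castSucc, x (Fin.last k)⟫_ℝ := by
    intro i _
    rw [real_inner_smul_left]
    have hgi : g i ≤ 0 := by
      by_cases hiS : i ∈ S
      · exact (hSempty i hiS).le
      · simpa [hS] using hiS
    nlinarith [h i.castSucc (Fin.last k) (hne i), hgi]
  intro i
  have := (Finset.sum_eq_zero_iff_of_nonneg hnonneg).mp hz i (Finset.mem_univ i)
  rw [real_inner_smul_left] at this
  rcases mul_eq_zero.mp this with h1 | h1
  · exact h1
  · exact absurd h1 (h _ _ (hne i)).ne

/-- Nonzero vectors in `ℝ^n` with pairwise negative inner products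
number at most `n + 1`. -/
theorem stmt_2 {n m : ℕ} (x : Fin m → EuclideanSpace ℝ (Fin n))
    (hx : ∀ i, x i ≠ 0)
    (h : ∀ i j, i ≠ j → ⟪x i, x j⟫_ℝ < 0) :
    m ≤ n + 1 := by
  cases m with
  | zero => omega
  | succ k =>
    have hli := li_aux x h
    have := hli.fintype_card_le_finrank
    simpa [finrank_euclideanSpace] using Nat.succ_le_succ this
end

section
/- Let x_1, …, x_m be nonzero vectors in ℝ^n such that ⟨x_i, x_j⟩ ≤ 0 for all i ≠ j. Then m ≤ 2n. -/
open scoped InnerProductSpace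
open Module Finset

/-- Key lemma: in a real inner product space of dimension at most `n`,
nonzero vectors with pairwise nonpositive inner products number at most `2n`. -/
lemma key_obtuse : ∀ (n : ℕ) (E : Type) [NormedAddCommGroup E] [InnerProductSpace ℝ E]
    [FiniteDimensional ℝ E], finrank ℝ E ≤ n → ∀ (m : ℕ) (x : Fin m → E),
    (∀ i, x i ≠ 0) → (∀ i j, i ≠ j → ⟪x i, x j⟫_ℝ ≤ 0) → m ≤ 2 * n := by
  intro n
  induction n with
  | zero =>
    intro E _ _ _ hrank m x hx h
    rcases Nat.eq_zero_or_pos m with hm | hm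
    · simp [hm]
    · exfalso
      have : Subsingleton E := by
        have : finrank ℝ E = 0 := Nat.le_zero.mp hrank
        exact (Module.finrank_zero_iff (R := ℝ) (M := E)).mp this
      exact hx ⟨0, hm⟩ (Subsingleton.elim _ _)
  | succ n ih =>
    intro E _ _ _ hrank m x hx h
    classical
    rcases Nat.eq_zero_or_pos m with hm | hm
    · omega
    set i0 : Fin m := ⟨0, hm⟩ with hi0
    set v : E := x i0 with hv
    have hv0 : v ≠ 0 := hx i0
    have hnv : ‖v‖ ^ 2 ≠ 0 := pow_ne_zero _ (norm_ne_zero_iff.mpr hv0)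
    set c : Fin m → ℝ := fun j => ⟪v, x j⟫_ℝ / ‖v‖ ^ 2 with hc
    set y : Fin m → E := fun j => x j - c j • v with hy
    have hyv : ∀ j, ⟪v, y j⟫_ℝ = 0 := by
      intro j
      simp only [hy, inner_sub_right, real_inner_smul_right, hc,
        real_inner_self_eq_norm_sq]
      field_simp
      ring
    have hcle : ∀ j, j ≠ i0 → c j ≤ 0 := by
      intro j hj
      have := h i0 j (Ne.symm hj)
      exact div_nonpos_of_nonpos_of_nonneg this (by positivity)
    -- inner products of projections
    have hyy : ∀ i j, i ≠ i0 → j ≠ i0 → i ≠ j → ⟪y i, y j⟫_ℝ ≤ 0 := by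
      intro i j hi hj hij
      have h1 : ⟪y i, y j⟫_ℝ = ⟪x i, y j⟫_ℝ := by
        simp only [hy, inner_sub_left, real_inner_smul_left]
        rw [show ⟪v, x j - c j • v⟫_ℝ = 0 from hyv j]; ring
      have h2 : ⟪x i, y j⟫_ℝ = ⟪x i, x j⟫_ℝ - c j * ⟪x i, v⟫_ℝ := by
        simp [hy, inner_sub_right, real_inner_smul_right]
      have h3 : ⟪x i, v⟫_ℝ ≤ 0 := h i i0 hi
      have h5 := h i j hij
      rw [h1, h2]; nlinarith [hcle j hj]
    -- a vector with zero projection is a negative multiple of v; at most one such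
    have huniq : ∀ i j, i ≠ i0 → j ≠ i0 → y i = 0 → y j = 0 → i = j := by
      intro i j hi hj hyi hyj
      by_contra hij
      have hxi : x i = c i • v := by
        have := hyi; rw [hy] at this; simpa [sub_eq_zero] using this
      have hxj : x j = c j • v := by
        have := hyj; rw [hy] at this; simpa [sub_eq_zero] using this
      have hci : c i < 0 := by
        rcases lt_or_eq_of_le (hcle i hi) with h' | h'
        · exact h'
        · exfalso; apply hx i; rw [hxi, h', zero_smul]
      have hcj : c j < 0 := by
        rcases lt_or_eq_of_le (hcle j hj) with h' | h'
        · exact h'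
        · exfalso; apply hx j; rw [hxj, h', zero_smul]
      have : ⟪x i, x j⟫_ℝ = c i * c j * ‖v‖ ^ 2 := by
        rw [hxi, hxj, real_inner_smul_left, real_inner_smul_right,
          real_inner_self_eq_norm_sq]; ring
      have hpos : (0:ℝ) < c i * c j * ‖v‖ ^ 2 := by
        have := mul_pos_of_neg_of_neg hci hcj
        have h2 : (0:ℝ) < ‖v‖ ^ 2 := by positivity
        positivity
      have := h i j hij
      linarith
    -- the good set
    set T : Finset (Fin m) := univ.filter (fun j => j ≠ i0 ∧ y j ≠ 0) with hT
    set K : Submodule ℝ E := (ℝ ∙ v)ᗮ with hK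
    have hmemK : ∀ j, y j ∈ K := fun j =>
      Submodule.mem_orthogonal_singleton_iff_inner_right.mpr (hyv j)
    -- rank bound for K
    have hrE : 1 ≤ finrank ℝ E := by
      have : Nontrivial E := nontrivial_of_ne v 0 hv0
      exact Module.finrank_pos
    have hrK : finrank ℝ K ≤ n := by
      have h1 : finrank ℝ (ℝ ∙ v) + finrank ℝ K = finrank ℝ E :=
        Submodule.finrank_add_finrank_orthogonal _
      have h2 : finrank ℝ (ℝ ∙ v) = 1 := finrank_span_singleton hv0
      omega
    -- apply the induction hypothesis to the family over T
    have hTcard : T.card ≤ 2 * n := by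
      set e := T.equivFin with he
      set x' : Fin T.card → K := fun k => ⟨y (e.symm k).1, hmemK _⟩ with hx'
      have hprop : ∀ k, ((e.symm k : Fin m) ≠ i0 ∧ y (e.symm k : Fin m) ≠ 0) := by
        intro k
        exact (mem_filter.mp (e.symm k).2).2
      refine ih K hrK T.card x' (fun k => ?_) (fun k l hkl => ?_)
      · intro hk
        exact (hprop k).2 (by simpa [hx', Subtype.ext_iff] using hk)
      · have hne : (e.symm k : Fin m) ≠ (e.symm l : Fin m) := by
          intro hh
          exact hkl (e.symm.injective (Subtype.ext hh))
        have := hyy _ _ (hprop k).1 (hprop l).1 hne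
        simpa [hx', Submodule.coe_inner] using this
    -- the bad set has at most 2 elements
    have hTc : (univ.filter (fun j => ¬(j ≠ i0 ∧ y j ≠ 0))).card ≤ 2 := by
      have hsub : (univ.filter (fun j => ¬(j ≠ i0 ∧ y j ≠ 0))) ⊆
          insert i0 (univ.filter (fun j => j ≠ i0 ∧ y j = 0)) := by
        intro j hj
        rw [mem_filter] at hj
        by_cases hji : j = i0
        · simp [hji]
        · rw [mem_insert, mem_filter]
          push_neg at hj
          exact Or.inr ⟨mem_univ j, hji, hj.2 hji⟩
      calc (univ.filter (fun j => ¬(j ≠ i0 ∧ y j ≠ 0))).card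
          ≤ (insert i0 (univ.filter (fun j => j ≠ i0 ∧ y j = 0))).card :=
            Finset.card_le_card hsub
        _ ≤ (univ.filter (fun j => j ≠ i0 ∧ y j = 0)).card + 1 :=
            Finset.card_insert_le _ _
        _ ≤ 1 + 1 := by
            gcongr
            apply Finset.card_le_one.mpr
            intro a ha b hb
            rw [mem_filter] at ha hb
            exact huniq a b ha.2.1 hb.2.1 ha.2.2 hb.2.2
    have hsplit : T.card + (univ.filter (fun j => ¬(j ≠ i0 ∧ y j ≠ 0))).card = m := by
      rw [hT, Finset.card_filter_add_card_filter_not]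
      simp
    omega

/-- Nonzero vectors in `ℝ^n` with pairwise non-positive inner products
number at most `2n`. -/
theorem stmt_3 {n m : ℕ} (x : Fin m → EuclideanSpace ℝ (Fin n))
    (hx : ∀ i, x i ≠ 0)
    (h : ∀ i j, i ≠ j → ⟪x i, x j⟫_ℝ ≤ 0) :
    m ≤ 2 * n := by
  exact key_obtuse n (EuclideanSpace ℝ (Fin n)) (by simp) m x hx h
end

section
/- Let x_1, …, x_m be a spherical two-distance set of unit vectors in ℝ^n at angles α, β which spans ℝ^n. Then the following are equivalent: (1) x_1, …, x_m is an (m/n)-tight frame for ℝ^n; (2) there exists a subset J ⊆ {1, …, m} with span{x_i : i ∈ J} = ℝ^n such that for every i ∈ J, α·∑_{j : j ≠ i, ⟨x_i, x_j⟩ = α} x_j + β·∑_{j : j ≠ i, ⟨x_i, x_j⟩ = β} x_j = (m/n − 1)·x_i. -/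
open scoped InnerProductSpace
open scoped Classical

private lemma frame_op_eq {n m : ℕ} (x : Fin m → EuclideanSpace ℝ (Fin n)) (c : ℝ)
    (H : ∀ v : EuclideanSpace ℝ (Fin n), ∑ i, ⟪v, x i⟫_ℝ ^ 2 = c * ‖v‖ ^ 2)
    (v : EuclideanSpace ℝ (Fin n)) :
    ∑ i, ⟪v, x i⟫_ℝ • x i = c • v := by
  have key : ∀ v w : EuclideanSpace ℝ (Fin n),
      ∑ i, ⟪v, x i⟫_ℝ * ⟪w, x i⟫_ℝ = c * ⟪v, w⟫_ℝ := by
    intro v w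
    have h1 := H (v + w)
    have h2 := H v
    have h3 := H w
    simp only [inner_add_left] at h1
    have hn : ‖v + w‖ ^ 2 = ‖v‖ ^ 2 + 2 * ⟪v, w⟫_ℝ + ‖w‖ ^ 2 := by
      rw [← real_inner_self_eq_norm_sq, ← real_inner_self_eq_norm_sq,
        ← real_inner_self_eq_norm_sq, inner_add_add_self, real_inner_comm w v]
      ring
    have hsum : ∑ i, (⟪v, x i⟫_ℝ + ⟪w, x i⟫_ℝ) ^ 2
        = ∑ i, ⟪v, x i⟫_ℝ ^ 2 + 2 * ∑ i, ⟪v, x i⟫_ℝ * ⟪w, x i⟫_ℝ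
          + ∑ i, ⟪w, x i⟫_ℝ ^ 2 := by
      rw [Finset.mul_sum, ← Finset.sum_add_distrib, ← Finset.sum_add_distrib]
      exact Finset.sum_congr rfl fun i _ => by ring
    rw [hsum, hn] at h1
    linarith
  apply ext_inner_left ℝ
  intro w
  rw [inner_sum, real_inner_smul_right]
  simp only [real_inner_smul_right]
  rw [← key w v]
  exact Finset.sum_congr rfl fun i _ => mul_comm _ _

private lemma decomp {n m : ℕ} (x : Fin m → EuclideanSpace ℝ (Fin n)) (α β : ℝ)
    (hαβ : α ≠ β) (hunit : ∀ i, ‖x i‖ = 1)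
    (htwo : ∀ i j, i ≠ j → ⟪x i, x j⟫_ℝ = α ∨ ⟪x i, x j⟫_ℝ = β) (i : Fin m) :
    ∑ j, ⟪x i, x j⟫_ℝ • x j =
      x i + (α • (∑ j ∈ Finset.univ.filter (fun j => j ≠ i ∧ ⟪x i, x j⟫_ℝ = α), x j) +
      β • (∑ j ∈ Finset.univ.filter (fun j => j ≠ i ∧ ⟪x i, x j⟫_ℝ = β), x j)) := by
  have hii : ⟪x i, x i⟫_ℝ = 1 := by
    rw [real_inner_self_eq_norm_sq, hunit i]; norm_num
  have hsplit : ∑ j, ⟪x i, x j⟫_ℝ • x j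
      = ⟪x i, x i⟫_ℝ • x i + ∑ j ∈ Finset.univ.erase i, ⟪x i, x j⟫_ℝ • x j := by
    rw [← Finset.add_sum_erase _ _ (Finset.mem_univ i)]
  rw [hsplit, hii, one_smul]
  congr 1
  have hpart : Finset.univ.erase i
      = Finset.univ.filter (fun j => j ≠ i ∧ ⟪x i, x j⟫_ℝ = α)
        ∪ Finset.univ.filter (fun j => j ≠ i ∧ ⟪x i, x j⟫_ℝ = β) := by
    ext j
    simp only [Finset.mem_erase, Finset.mem_univ, and_true, Finset.mem_union,
      Finset.mem_filter, true_and]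
    constructor
    · intro hj
      rcases htwo i j (fun h => hj (h ▸ rfl)) with h | h
      · exact Or.inl ⟨hj, h⟩
      · exact Or.inr ⟨hj, h⟩
    · rintro (⟨hj, _⟩ | ⟨hj, _⟩) <;> exact hj
  have hdisj : Disjoint (Finset.univ.filter (fun j => j ≠ i ∧ ⟪x i, x j⟫_ℝ = α))
      (Finset.univ.filter (fun j => j ≠ i ∧ ⟪x i, x j⟫_ℝ = β)) := by
    rw [Finset.disjoint_left]
    intro j hj hj'
    simp only [Finset.mem_filter] at hj hj'
    exact hαβ (hj.2.2 ▸ hj'.2.2)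
  rw [hpart, Finset.sum_union hdisj, Finset.smul_sum, Finset.smul_sum]
  congr 1
  · exact Finset.sum_congr rfl fun j hj => by
      simp only [Finset.mem_filter] at hj; rw [hj.2.2]
  · exact Finset.sum_congr rfl fun j hj => by
      simp only [Finset.mem_filter] at hj; rw [hj.2.2]

/-- Characterization of tightness of a spanning two-distance set: the family
is an `m/n`-tight frame iff on some spanning subset `J` one has
`α ∑_{⟨x_i,x_j⟩=α} x_j + β ∑_{⟨x_i,x_j⟩=β} x_j = (m/n − 1) x_i` for all `i ∈ J`. -/
theorem stmt_7 {n m : ℕ} (x : Fin m → EuclideanSpace ℝ (Fin n)) (α β : ℝ)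
    (hαβ : α ≠ β) (hα : α ∈ Set.Icc (-1 : ℝ) 1) (hβ : β ∈ Set.Icc (-1 : ℝ) 1)
    (hunit : ∀ i, ‖x i‖ = 1)
    (htwo : ∀ i j, i ≠ j → ⟪x i, x j⟫_ℝ = α ∨ ⟪x i, x j⟫_ℝ = β)
    (hspan : Submodule.span ℝ (Set.range x) = ⊤) :
    (∀ v : EuclideanSpace ℝ (Fin n),
        ∑ i, ⟪v, x i⟫_ℝ ^ 2 = ((m : ℝ) / n) * ‖v‖ ^ 2) ↔
      (∃ J : Finset (Fin m),
        Submodule.span ℝ (x '' (J : Set (Fin m))) = ⊤ ∧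
        ∀ i ∈ J,
          α • (∑ j ∈ Finset.univ.filter (fun j => j ≠ i ∧ ⟪x i, x j⟫_ℝ = α), x j) +
          β • (∑ j ∈ Finset.univ.filter (fun j => j ≠ i ∧ ⟪x i, x j⟫_ℝ = β), x j) =
            ((m : ℝ) / n - 1) • x i) := by
  set c : ℝ := (m : ℝ) / n with hc
  constructor
  · intro H
    refine ⟨Finset.univ, by simpa [Set.image_univ] using hspan, fun i _ => ?_⟩
    have h1 := frame_op_eq x c H (x i)
    have h2 := decomp x α β hαβ hunit htwo i
    rw [h2] at h1
    have : α • (∑ j ∈ Finset.univ.filter (fun j => j ≠ i ∧ ⟪x i, x j⟫_ℝ = α), x j) +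
        β • (∑ j ∈ Finset.univ.filter (fun j => j ≠ i ∧ ⟪x i, x j⟫_ℝ = β), x j)
        = c • x i - x i := by
      rw [← h1]; abel
    rw [this, sub_smul, one_smul]
  · rintro ⟨J, hJspan, hJ⟩
    intro v
    have hP : ∀ v : EuclideanSpace ℝ (Fin n), ∑ j, ⟪v, x j⟫_ℝ • x j = c • v := by
      intro v
      have hv : v ∈ Submodule.span ℝ (x '' (J : Set (Fin m))) := by
        rw [hJspan]; trivial
      induction hv using Submodule.span_induction with
      | mem w hw =>
        obtain ⟨i, hi, rfl⟩ := hw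
        have := hJ i hi
        rw [decomp x α β hαβ hunit htwo i, this, sub_smul, one_smul]
        abel
      | zero => simp
      | add w u hw hu ihw ihu =>
        simp only [inner_add_left, add_smul, Finset.sum_add_distrib, ihw, ihu, smul_add]
      | smul a w hw ihw =>
        simp only [inner_smul_left, RCLike.star_def, starRingEnd_apply, star_trivial,
          mul_smul, ← Finset.smul_sum, ihw, smul_comm a c]
    have := hP v
    have hg : ∑ i, ⟪v, x i⟫_ℝ ^ 2 = ⟪v, ∑ j, ⟪v, x j⟫_ℝ • x j⟫_ℝ := by
      rw [inner_sum]
      exact Finset.sum_congr rfl fun i _ => by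
        rw [real_inner_smul_right]; ring
    rw [hg, this, real_inner_smul_right, real_inner_self_eq_norm_sq]
end

section
/- Let x_1, …, x_m be a spherical two-distance set of unit vectors in ℝ^n at angles α, β which is an (m/n)-tight frame for ℝ^n, and suppose α ≠ −β. Then the set is regular (the number k_α = |{j ≠ i : ⟨x_i, x_j⟩ = α}| is independent of i), and its Grammian constant c = ∑_{j=1}^m ⟨x_i, x_j⟩ equals either 0 or m/n. -/
open scoped InnerProductSpace
open scoped Classical

/-- A two-distance `m/n`-tight frame with `α ≠ −β` is regular, and its
Grammian constant is `0` or `m/n`. -/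
theorem stmt_8 {n m : ℕ} (x : Fin m → EuclideanSpace ℝ (Fin n)) (α β : ℝ)
    (hαβ : α ≠ β) (hα : α ∈ Set.Icc (-1 : ℝ) 1) (hβ : β ∈ Set.Icc (-1 : ℝ) 1)
    (hunit : ∀ i, ‖x i‖ = 1)
    (htwo : ∀ i j, i ≠ j → ⟪x i, x j⟫_ℝ = α ∨ ⟪x i, x j⟫_ℝ = β)
    (htight : ∀ v : EuclideanSpace ℝ (Fin n),
      ∑ i, ⟪v, x i⟫_ℝ ^ 2 = ((m : ℝ) / n) * ‖v‖ ^ 2)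
    (hne : α ≠ -β) :
    (∃ k : ℕ, ∀ i,
      (Finset.univ.filter (fun j => j ≠ i ∧ ⟪x i, x j⟫_ℝ = α)).card = k) ∧
    (∃ c : ℝ, (∀ i, ∑ j, ⟪x i, x j⟫_ℝ = c) ∧ (c = 0 ∨ c = (m : ℝ) / n)) := by
  classical
  rcases Nat.eq_zero_or_pos m with hm | hm
  · subst hm
    exact ⟨⟨0, fun i => i.elim0⟩, 0, fun i => i.elim0, Or.inl rfl⟩
  have i0 : Fin m := ⟨0, hm⟩
  set A : Fin m → Finset (Fin m) := fun i =>
    Finset.univ.filter (fun j => j ≠ i ∧ ⟪x i, x j⟫_ℝ = α) with hA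
  have hself : ∀ i, ⟪x i, x i⟫_ℝ = 1 := by
    intro i
    rw [real_inner_self_eq_norm_sq, hunit i]
    norm_num
  have hsub : ∀ i, A i ⊆ Finset.univ.erase i := by
    intro i j hj
    simp only [hA, Finset.mem_filter] at hj
    exact Finset.mem_erase.2 ⟨hj.2.1, Finset.mem_univ j⟩
  have hcarde : ∀ i : Fin m, ((Finset.univ.erase i \ A i).card : ℝ)
      = (m : ℝ) - 1 - (A i).card := by
    intro i
    rw [Finset.card_sdiff_of_subset (hsub i), Finset.card_erase_of_mem (Finset.mem_univ i),
      Finset.card_univ, Fintype.card_fin]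
    have h1 : (A i).card ≤ m - 1 := by
      simpa [Finset.card_erase_of_mem (Finset.mem_univ i), Finset.card_univ] using
        Finset.card_le_card (hsub i)
    rw [Nat.cast_sub h1, Nat.cast_sub hm]
    push_cast
    ring
  have key : ∀ (i : Fin m) (g : ℝ → ℝ),
      ∑ j, g ⟪x i, x j⟫_ℝ
        = g 1 + ((A i).card : ℝ) * g α + ((m : ℝ) - 1 - (A i).card) * g β := by
    intro i g
    rw [← Finset.add_sum_erase _ _ (Finset.mem_univ i), hself i, add_assoc]
    congr 1
    rw [← Finset.sum_sdiff (hsub i), add_comm]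
    congr 1
    · rw [Finset.sum_congr rfl (fun j hj => ?_), Finset.sum_const, nsmul_eq_mul]
      simp only [hA, Finset.mem_filter] at hj
      rw [hj.2.2]
    · rw [Finset.sum_congr rfl (fun j hj => ?_), Finset.sum_const, nsmul_eq_mul,
        hcarde i]
      simp only [Finset.mem_sdiff, Finset.mem_erase, hA, Finset.mem_filter,
        Finset.mem_univ, true_and] at hj
      rcases htwo i j (fun h => hj.1.1 h.symm) with h | h
      · exact absurd ⟨hj.1.1, h⟩ hj.2
      · rw [h]
  have hsq : ∀ i : Fin m,
      1 + ((A i).card : ℝ) * α ^ 2 + ((m : ℝ) - 1 - (A i).card) * β ^ 2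
        = (m : ℝ) / n := by
    intro i
    have h := key i (fun t => t ^ 2)
    simp only [one_pow] at h
    rw [← h, htight (x i), hunit i]
    norm_num
  have hαβ2 : α ^ 2 - β ^ 2 ≠ 0 := by
    intro h
    have h1 : (α - β) * (α + β) = 0 := by linear_combination h
    rcases mul_eq_zero.1 h1 with h2 | h2
    · exact hαβ (by linarith)
    · exact hne (by linarith)
  have hcard : ∀ i : Fin m, ((A i).card : ℝ) = ((A i0).card : ℝ) := by
    intro i
    have h1 := hsq i
    have h2 := hsq i0
    have h3 : (((A i).card : ℝ) - (A i0).card) * (α ^ 2 - β ^ 2) = 0 := by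
      linear_combination h1 - h2
    rcases mul_eq_zero.1 h3 with h4 | h4
    · linarith
    · exact absurd h4 hαβ2
  constructor
  · exact ⟨(A i0).card, fun i => Nat.cast_injective (hcard i)⟩
  · set c : ℝ := 1 + ((A i0).card : ℝ) * α + ((m : ℝ) - 1 - (A i0).card) * β with hc
    have hrow : ∀ i, ∑ j, ⟪x i, x j⟫_ℝ = c := by
      intro i
      have h := key i id
      simp only [id] at h
      rw [h, hcard i]
    refine ⟨c, hrow, ?_⟩
    set w : EuclideanSpace ℝ (Fin n) := ∑ j, x j with hw
    have hwi : ∀ i, ⟪w, x i⟫_ℝ = c := by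
      intro i
      rw [hw, sum_inner]
      rw [← hrow i]
      exact Finset.sum_congr rfl fun j _ => real_inner_comm _ _
    have hnorm : ‖w‖ ^ 2 = m * c := by
      rw [← real_inner_self_eq_norm_sq, hw, inner_sum]
      simp only [← hw, hwi]
      rw [Finset.sum_const, Finset.card_univ, Fintype.card_fin, nsmul_eq_mul]
    have h := htight w
    rw [hnorm] at h
    simp only [hwi] at h
    rw [Finset.sum_const, Finset.card_univ, Fintype.card_fin, nsmul_eq_mul] at h
    have hm' : (0 : ℝ) < m := by exact_mod_cast hm
    have h2 : c ^ 2 = ((m : ℝ) / n) * c := by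
      have h' : (m : ℝ) * c ^ 2 = (m : ℝ) * (((m : ℝ) / n) * c) := by
        linear_combination h
      exact mul_left_cancel₀ (ne_of_gt hm') h'
    have h3 : c * (c - (m : ℝ) / n) = 0 := by linear_combination h2
    rcases mul_eq_zero.1 h3 with h4 | h4
    · exact Or.inl h4
    · exact Or.inr (by linarith)
end

section
/- Let x_1, …, x_m be a regular spherical two-distance set of unit vectors in ℝ^n at angles α, β with multiplicities k_α, k_β which is an (m/n)-tight frame for ℝ^n, with m > n. Then there exist unit vectors y_1, …, y_m in ℝ^{m−n} forming an (m/(m−n))-tight frame for ℝ^{m−n} such that ⟨y_i, y_j⟩ = −(n/(m−n))·⟨x_i, x_j⟩ for all i ≠ j; in particular y_1, …, y_m is a regular two-distance set at angles −(n/(m−n))α and −(n/(m−n))β with multiplicities k_α and k_β. -/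
open scoped InnerProductSpace
open scoped Classical

lemma naimark_aux {n m : ℕ} (hmn : n < m) (hn0 : 0 < n)
    (x : Fin m → EuclideanSpace ℝ (Fin n))
    (hunit : ∀ i, ‖x i‖ = 1)
    (htight : ∀ v : EuclideanSpace ℝ (Fin n),
      ∑ i, ⟪v, x i⟫_ℝ ^ 2 = ((m : ℝ) / n) * ‖v‖ ^ 2) :
    ∃ y : Fin m → EuclideanSpace ℝ (Fin (m - n)),
      (∀ i, ‖y i‖ = 1) ∧
      (∀ v : EuclideanSpace ℝ (Fin (m - n)),
        ∑ i, ⟪v, y i⟫_ℝ ^ 2 = ((m : ℝ) / ((m : ℝ) - n)) * ‖v‖ ^ 2) ∧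
      (∀ i j, i ≠ j →
        ⟪y i, y j⟫_ℝ = -((n : ℝ) / ((m : ℝ) - n)) * ⟪x i, x j⟫_ℝ) := by
  classical
  have hm0 : 0 < m := (Nat.zero_le n).trans_lt hmn
  have hmR : (0:ℝ) < m := by exact_mod_cast hm0
  have hnR : (0:ℝ) < n := by exact_mod_cast hn0
  have hmnR : (0:ℝ) < (m:ℝ) - n := by
    have : (n:ℝ) < m := by exact_mod_cast hmn
    linarith
  set c : ℝ := Real.sqrt ((n:ℝ)/m) with hc
  have hc2 : c^2 = (n:ℝ)/m := Real.sq_sqrt (by positivity)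
  set E := EuclideanSpace ℝ (Fin m) with hE
  -- the linear map T
  let T0 : EuclideanSpace ℝ (Fin n) →ₗ[ℝ] E :=
    { toFun := fun v => (WithLp.toLp 2 (fun i => c * ⟪x i, v⟫_ℝ) : E)
      map_add' := fun u v => by
        refine PiLp.ext fun i => ?_
        show c * ⟪x i, u + v⟫_ℝ = c * ⟪x i, u⟫_ℝ + c * ⟪x i, v⟫_ℝ
        rw [inner_add_right]; ring
      map_smul' := fun r v => by
        refine PiLp.ext fun i => ?_
        show c * ⟪x i, r • v⟫_ℝ = r * (c * ⟪x i, v⟫_ℝ)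
        rw [real_inner_smul_right]; ring }
  have hT0app : ∀ v i, T0 v i = c * ⟪x i, v⟫_ℝ := fun _ _ => rfl
  have hTnorm : ∀ v, ‖T0 v‖ = ‖v‖ := by
    intro v
    have h1 : ‖T0 v‖^2 = ‖v‖^2 := by
      rw [EuclideanSpace.norm_eq, Real.sq_sqrt (by positivity)]
      calc ∑ i, ‖T0 v i‖^2 = ∑ i, c^2 * ⟪v, x i⟫_ℝ^2 := by
              refine Finset.sum_congr rfl fun i _ => ?_
              rw [hT0app, Real.norm_eq_abs, sq_abs, mul_pow, real_inner_comm]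
        _ = c^2 * ((m:ℝ)/n * ‖v‖^2) := by rw [← Finset.mul_sum, htight v]
        _ = ‖v‖^2 := by rw [hc2]; field_simp
    calc ‖T0 v‖ = Real.sqrt (‖T0 v‖^2) := (Real.sqrt_sq (norm_nonneg _)).symm
      _ = Real.sqrt (‖v‖^2) := by rw [h1]
      _ = ‖v‖ := Real.sqrt_sq (norm_nonneg _)
  let T : EuclideanSpace ℝ (Fin n) →ₗᵢ[ℝ] E := ⟨T0, hTnorm⟩
  set W : Submodule ℝ E := LinearMap.range T0 with hW
  have hWrank : Module.finrank ℝ W = n := by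
    rw [LinearMap.finrank_range_of_inj]
    · exact finrank_euclideanSpace_fin
    · exact T.injective
  have hWperp : Module.finrank ℝ ↥Wᗮ = m - n := by
    have h := W.finrank_add_finrank_orthogonal
    rw [hWrank, finrank_euclideanSpace_fin] at h
    omega
  set e : Fin m → E := fun i => EuclideanSpace.single i (1:ℝ) with he
  -- projection onto W of e i
  have hQ : ∀ i, (Submodule.orthogonalProjectionOnto W (e i) : E) = T0 (c • x i) := by
    intro i
    show W.starProjection (e i) = _
    apply Submodule.eq_starProjection_of_mem_of_inner_eq_zero
    · exact ⟨c • x i, rfl⟩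
    · rintro w ⟨u, rfl⟩
      rw [inner_sub_left, sub_eq_zero]
      have h1 : ⟪e i, T0 u⟫_ℝ = T0 u i := by
        show ⟪EuclideanSpace.single i (1:ℝ), T0 u⟫_ℝ = T0 u i
        rw [EuclideanSpace.inner_single_left]
        simp
      have h2 : ⟪T0 (c • x i), T0 u⟫_ℝ = c * ⟪x i, u⟫_ℝ := by
        rw [show T0 (c • x i) = T (c • x i) from rfl, show T0 u = T u from rfl,
          T.inner_map_map, real_inner_smul_left]
      rw [h1, h2, hT0app]
  -- key inner product formula
  have hP : ∀ i j, ⟪((Submodule.orthogonalProjectionOnto Wᗮ (e i)) : E), ((Submodule.orthogonalProjectionOnto Wᗮ (e j)) : E)⟫_ℝ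
      = ⟪e i, e j⟫_ℝ - (n:ℝ)/m * ⟪x i, x j⟫_ℝ := by
    intro i j
    rw [← Submodule.starProjection_apply, ← Submodule.starProjection_apply,
      Submodule.starProjection_orthogonal_val, Submodule.starProjection_orthogonal_val,
      Submodule.starProjection_apply, Submodule.starProjection_apply, hQ i, hQ j]
    have h1 : ∀ a b : Fin m, ⟪e a, T0 (c • x b)⟫_ℝ = c^2 * ⟪x a, x b⟫_ℝ := by
      intro a b
      have : ⟪e a, T0 (c • x b)⟫_ℝ = T0 (c • x b) a := by
        show ⟪EuclideanSpace.single a (1:ℝ), T0 (c • x b)⟫_ℝ = T0 (c • x b) a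
        rw [EuclideanSpace.inner_single_left]
        simp
      rw [this, hT0app, real_inner_smul_right]; ring
    have h2 : ⟪T0 (c • x i), e j⟫_ℝ = c^2 * ⟪x i, x j⟫_ℝ := by
      rw [real_inner_comm, h1, real_inner_comm]
    have h3 : ⟪T0 (c • x i), T0 (c • x j)⟫_ℝ = c^2 * ⟪x i, x j⟫_ℝ := by
      rw [show T0 (c • x i) = T (c • x i) from rfl, show T0 (c • x j) = T (c • x j) from rfl,
        T.inner_map_map, real_inner_smul_left, real_inner_smul_right]; ring
    rw [inner_sub_left, inner_sub_right, inner_sub_right, h1, h2, h3, hc2]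
    ring
  -- the basis of the complement
  let U : ↥Wᗮ ≃ₗᵢ[ℝ] EuclideanSpace ℝ (Fin (m - n)) :=
    ((stdOrthonormalBasis ℝ ↥Wᗮ).reindex (finCongr hWperp)).repr
  set s : ℝ := Real.sqrt ((m:ℝ)/((m:ℝ) - n)) with hs
  have hs2 : s^2 = (m:ℝ)/((m:ℝ) - n) := Real.sq_sqrt (by positivity)
  have heinner : ∀ i j : Fin m, ⟪e i, e j⟫_ℝ = if i = j then 1 else 0 := by
    intro i j
    show ⟪EuclideanSpace.single i (1:ℝ), EuclideanSpace.single j (1:ℝ)⟫_ℝ = _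
    rw [EuclideanSpace.inner_single_left]
    simp [EuclideanSpace.single_apply, eq_comm]
  have hyinner : ∀ i j : Fin m,
      ⟪s • U (Submodule.orthogonalProjectionOnto Wᗮ (e i)), s • U (Submodule.orthogonalProjectionOnto Wᗮ (e j))⟫_ℝ
        = (m:ℝ)/((m:ℝ) - n) * (⟪e i, e j⟫_ℝ - (n:ℝ)/m * ⟪x i, x j⟫_ℝ) := by
    intro i j
    rw [real_inner_smul_left, real_inner_smul_right, LinearIsometryEquiv.inner_map_map,
      Submodule.coe_inner, hP, ← hs2]
    ring
  refine ⟨fun i => s • U (Submodule.orthogonalProjectionOnto Wᗮ (e i)), ?_, ?_, ?_⟩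
  · intro i
    have h := hyinner i i
    rw [heinner, if_pos rfl, real_inner_self_eq_norm_sq, real_inner_self_eq_norm_sq,
      hunit i] at h
    have h1 : ‖s • U (Submodule.orthogonalProjectionOnto Wᗮ (e i))‖^2 = 1 := by
      rw [h]; field_simp
    rw [← Real.sqrt_sq (norm_nonneg _), h1, Real.sqrt_one]
  · intro v
    set w : ↥Wᗮ := U.symm v with hw
    set u : E := (w : E) with hu
    have hui : ∀ i, ⟪v, s • U (Submodule.orthogonalProjectionOnto Wᗮ (e i))⟫_ℝ = s * u i := by
      intro i
      rw [real_inner_smul_right]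
      have ha : ⟪v, U (Submodule.orthogonalProjectionOnto Wᗮ (e i))⟫_ℝ
          = ⟪w, Submodule.orthogonalProjectionOnto Wᗮ (e i)⟫_ℝ := by
        conv_lhs => rw [← U.apply_symm_apply v]
        rw [LinearIsometryEquiv.inner_map_map]
      rw [ha, Submodule.coe_inner, ← Submodule.starProjection_apply,
        ← Submodule.inner_starProjection_left_eq_right, Submodule.starProjection_apply,
        Submodule.orthogonalProjectionOnto_mem_subspace_eq_self]
      have : ⟪(w : E), e i⟫_ℝ = u i := by
        show ⟪(w : E), EuclideanSpace.single i (1:ℝ)⟫_ℝ = u i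
        rw [EuclideanSpace.inner_single_right]
        simp [hu]
      rw [this]
    have hnu : ∑ i, (u i)^2 = ‖v‖^2 := by
      have h1 : ‖u‖ = ‖v‖ := by
        rw [hu]
        rw [show ‖(w : E)‖ = ‖w‖ from rfl, hw, U.symm.norm_map]
      rw [← h1, EuclideanSpace.norm_eq, Real.sq_sqrt (by positivity)]
      exact Finset.sum_congr rfl fun i _ => by rw [Real.norm_eq_abs, sq_abs]
    calc ∑ i, ⟪v, s • U (Submodule.orthogonalProjectionOnto Wᗮ (e i))⟫_ℝ^2
        = ∑ i, s^2 * (u i)^2 := by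
          refine Finset.sum_congr rfl fun i _ => ?_
          rw [hui i, mul_pow]
      _ = s^2 * ∑ i, (u i)^2 := by rw [Finset.mul_sum]
      _ = (m:ℝ)/((m:ℝ) - n) * ‖v‖^2 := by rw [hs2, hnu]
  · intro i j hij
    rw [hyinner, heinner, if_neg hij]
    field_simp
    ring

/-- Naimark complement of a regular two-distance tight frame: it is a
regular two-distance tight frame of `m` vectors for `ℝ^{m−n}` at angles
`−(n/(m−n))α` and `−(n/(m−n))β` with the same multiplicities. -/
theorem stmt_9 {n m : ℕ} (hmn : n < m)
    (x : Fin m → EuclideanSpace ℝ (Fin n)) (α β : ℝ) (kα kβ : ℕ)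
    (hαβ : α ≠ β) (hα : α ∈ Set.Icc (-1 : ℝ) 1) (hβ : β ∈ Set.Icc (-1 : ℝ) 1)
    (hunit : ∀ i, ‖x i‖ = 1)
    (htwo : ∀ i j, i ≠ j → ⟪x i, x j⟫_ℝ = α ∨ ⟪x i, x j⟫_ℝ = β)
    (hregα : ∀ i, (Finset.univ.filter (fun j => j ≠ i ∧ ⟪x i, x j⟫_ℝ = α)).card = kα)
    (hregβ : ∀ i, (Finset.univ.filter (fun j => j ≠ i ∧ ⟪x i, x j⟫_ℝ = β)).card = kβ)
    (htight : ∀ v : EuclideanSpace ℝ (Fin n),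
      ∑ i, ⟪v, x i⟫_ℝ ^ 2 = ((m : ℝ) / n) * ‖v‖ ^ 2) :
    ∃ y : Fin m → EuclideanSpace ℝ (Fin (m - n)),
      (∀ i, ‖y i‖ = 1) ∧
      (∀ v : EuclideanSpace ℝ (Fin (m - n)),
        ∑ i, ⟪v, y i⟫_ℝ ^ 2 = ((m : ℝ) / ((m : ℝ) - n)) * ‖v‖ ^ 2) ∧
      (∀ i j, i ≠ j →
        ⟪y i, y j⟫_ℝ = -((n : ℝ) / ((m : ℝ) - n)) * ⟪x i, x j⟫_ℝ) ∧
      (∀ i j, i ≠ j →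
        ⟪y i, y j⟫_ℝ = -((n : ℝ) / ((m : ℝ) - n)) * α ∨
        ⟪y i, y j⟫_ℝ = -((n : ℝ) / ((m : ℝ) - n)) * β) ∧
      (∀ i, (Finset.univ.filter (fun j => j ≠ i ∧
          ⟪y i, y j⟫_ℝ = -((n : ℝ) / ((m : ℝ) - n)) * α)).card = kα) ∧
      (∀ i, (Finset.univ.filter (fun j => j ≠ i ∧
          ⟪y i, y j⟫_ℝ = -((n : ℝ) / ((m : ℝ) - n)) * β)).card = kβ) := by
  classical
  have hm0 : 0 < m := (Nat.zero_le n).trans_lt hmn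
  have hn0 : 0 < n := by
    rcases Nat.eq_zero_or_pos n with h | h
    · exfalso
      subst h
      have h1 := hunit ⟨0, hm0⟩
      have h2 : ‖x ⟨0, hm0⟩‖ = 0 := by
        rw [EuclideanSpace.norm_eq]
        simp
      rw [h2] at h1
      norm_num at h1
    · exact h
  have hmR : (0:ℝ) < m := by exact_mod_cast hm0
  have hnR : (0:ℝ) < n := by exact_mod_cast hn0
  have hmnR : (0:ℝ) < (m:ℝ) - n := by
    have : (n:ℝ) < m := by exact_mod_cast hmn
    linarith
  have htne : -((n:ℝ)/((m:ℝ) - n)) ≠ 0 :=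
    neg_ne_zero.mpr (ne_of_gt (div_pos hnR hmnR))
  obtain ⟨y, hy1, hy2, hy3⟩ := naimark_aux hmn hn0 x hunit htight
  refine ⟨y, hy1, hy2, hy3, ?_, ?_, ?_⟩
  · intro i j hij
    rcases htwo i j hij with h | h
    · left; rw [hy3 i j hij, h]
    · right; rw [hy3 i j hij, h]
  · intro i
    rw [← hregα i]
    apply Finset.card_bij (fun j _ => j) ?_ (fun _ _ _ _ h => h)
      (fun j hj => ⟨j, ?_, rfl⟩)
    · intro j hj
      simp only [Finset.mem_filter, Finset.mem_univ, true_and] at hj ⊢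
      obtain ⟨hji, hv⟩ := hj
      have hij : i ≠ j := fun h => hji h.symm
      rw [hy3 i j hij] at hv
      exact ⟨hji, mul_left_cancel₀ htne hv⟩
    · simp only [Finset.mem_filter, Finset.mem_univ, true_and] at hj ⊢
      obtain ⟨hji, hv⟩ := hj
      have hij : i ≠ j := fun h => hji h.symm
      exact ⟨hji, by rw [hy3 i j hij, hv]⟩
  · intro i
    rw [← hregβ i]
    apply Finset.card_bij (fun j _ => j) ?_ (fun _ _ _ _ h => h)
      (fun j hj => ⟨j, ?_, rfl⟩)
    · intro j hj
      simp only [Finset.mem_filter, Finset.mem_univ, true_and] at hj ⊢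
      obtain ⟨hji, hv⟩ := hj
      have hij : i ≠ j := fun h => hji h.symm
      rw [hy3 i j hij] at hv
      exact ⟨hji, mul_left_cancel₀ htne hv⟩
    · simp only [Finset.mem_filter, Finset.mem_univ, true_and] at hj ⊢
      obtain ⟨hji, hv⟩ := hj
      have hij : i ≠ j := fun h => hji h.symm
      exact ⟨hji, by rw [hy3 i j hij, hv]⟩
end

section
/- Let x_1, …, x_m be a spherical two-distance set of unit vectors in ℝ^n at angles α, β with α + β < 0. Then there exist unit vectors y_1, …, y_m in ℝ^{n+1} and a constant γ with 0 ≤ γ < 1 such that |⟨y_i, y_j⟩| = γ for all i ≠ j (that is, y_1, …, y_m span m equiangular lines in ℝ^{n+1}). Explicitly, one may take t = √(2/(2 − (α + β))) and y_i = (t·x_i, √(1 − t²)). -/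
open scoped InnerProductSpace

/-- From a spherical two-distance set in `ℝ^n` with `α + β < 0` one obtains
`m` equiangular lines in `ℝ^{n+1}`: there are unit vectors `y_1, …, y_m` in
`ℝ^{n+1}` whose pairwise inner products have common absolute value `γ < 1`. -/
theorem stmt_17 {n m : ℕ} (x : Fin m → EuclideanSpace ℝ (Fin n)) (α β : ℝ)
    (hαβ : α ≠ β) (hα : α ∈ Set.Icc (-1 : ℝ) 1) (hβ : β ∈ Set.Icc (-1 : ℝ) 1)
    (hunit : ∀ i, ‖x i‖ = 1)
    (htwo : ∀ i j, i ≠ j → ⟪x i, x j⟫_ℝ = α ∨ ⟪x i, x j⟫_ℝ = β)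
    (hsum : α + β < 0) :
    ∃ (y : Fin m → EuclideanSpace ℝ (Fin (n + 1))) (γ : ℝ),
      0 ≤ γ ∧ γ < 1 ∧ (∀ i, ‖y i‖ = 1) ∧
      ∀ i j, i ≠ j → |⟪y i, y j⟫_ℝ| = γ := by
  obtain ⟨hα1, hα2⟩ := hα
  obtain ⟨hβ1, hβ2⟩ := hβ
  have hd : (0:ℝ) < 2 - (α + β) := by linarith
  set t : ℝ := Real.sqrt (2 / (2 - (α + β))) with htdef
  set c : ℝ := Real.sqrt (1 - 2 / (2 - (α + β))) with hcdef
  have ht2 : t ^ 2 = 2 / (2 - (α + β)) := Real.sq_sqrt (by positivity)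
  have hle : 2 / (2 - (α + β)) ≤ 1 := by
    rw [div_le_one hd]; linarith
  have hc2 : c ^ 2 = 1 - 2 / (2 - (α + β)) := Real.sq_sqrt (by linarith)
  set y : Fin m → EuclideanSpace ℝ (Fin (n + 1)) :=
    fun i => (WithLp.equiv 2 (Fin (n+1) → ℝ)).symm
      (Fin.snoc (fun k => t * x i k) c) with hydef
  have key : ∀ i j, ⟪y i, y j⟫_ℝ = t ^ 2 * ⟪x i, x j⟫_ℝ + c ^ 2 := by
    intro i j
    have hx : ⟪x i, x j⟫_ℝ = ∑ k, x i k * x j k := by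
      simp [PiLp.inner_apply, RCLike.inner_apply, mul_comm]
    rw [hx]
    simp only [hydef, PiLp.inner_apply, RCLike.inner_apply, starRingEnd_apply,
      star_trivial, WithLp.equiv_symm_apply, PiLp.toLp_apply]
    rw [Fin.sum_univ_castSucc]
    simp only [Fin.snoc_castSucc, Fin.snoc_last, Finset.mul_sum]
    ring_nf
    rw [add_comm]; congr 1; exact Finset.sum_congr rfl fun k _ => by ring
  have hnorm : ∀ i, ‖y i‖ = 1 := by
    intro i
    have h1 : ⟪x i, x i⟫_ℝ = 1 := by
      rw [real_inner_self_eq_norm_sq, hunit i]; norm_num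
    have h2 : ⟪y i, y i⟫_ℝ = 1 := by
      rw [key, h1, ht2, hc2]; ring
    have h3 : ‖y i‖ ^ 2 = 1 := by rw [← real_inner_self_eq_norm_sq, h2]
    nlinarith [norm_nonneg (y i)]
  refine ⟨y, |α - β| / (2 - (α + β)), by positivity, ?_, hnorm, ?_⟩
  · have h1 : α < 1 := by linarith
    have h2 : β < 1 := by linarith
    rw [div_lt_one hd, abs_lt]
    constructor <;> linarith
  · intro i j hij
    rcases htwo i j hij with h | h <;> rw [key, h, ht2, hc2]
    · have : 2 / (2 - (α + β)) * α + (1 - 2 / (2 - (α + β))) = (α - β) / (2 - (α + β)) := by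
        field_simp; ring
      rw [this, abs_div, abs_of_pos hd]
    · have : 2 / (2 - (α + β)) * β + (1 - 2 / (2 - (α + β))) = (β - α) / (2 - (α + β)) := by
        field_simp; ring
      rw [this, abs_div, abs_of_pos hd, abs_sub_comm]
end

section
/- Let n ≥ 2 and suppose x_1, …, x_{2n} are unit vectors in ℝ^n forming a 2-tight frame for ℝ^n (i.e., an equiangular tight frame of 2n vectors) such that |⟨x_i, x_j⟩| = α for all i ≠ j, for some constant α. Then n is odd. -/
open scoped InnerProductSpace
open Finset

/-- If an equiangular tight frame of `2n` unit vectors exists for `ℝ^n`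
(`n ≥ 2`), then `n` is odd. -/
theorem stmt_18 {n : ℕ} (hn : 2 ≤ n)
    (x : Fin (2 * n) → EuclideanSpace ℝ (Fin n)) (α : ℝ)
    (hunit : ∀ i, ‖x i‖ = 1)
    (hequi : ∀ i j, i ≠ j → |⟪x i, x j⟫_ℝ| = α)
    (htight : ∀ v : EuclideanSpace ℝ (Fin n),
      ∑ i, ⟪v, x i⟫_ℝ ^ 2 = 2 * ‖v‖ ^ 2) :
    Odd n := by
  -- bilinear frame identity
  have hbil : ∀ u v : EuclideanSpace ℝ (Fin n),
      ∑ k, ⟪u, x k⟫_ℝ * ⟪v, x k⟫_ℝ = 2 * ⟪u, v⟫_ℝ := by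
    intro u v
    have h1 := htight (u + v)
    have h2 := htight u
    have h3 := htight v
    have hnorm : ‖u + v‖^2 = ‖u‖^2 + 2*⟪u,v⟫_ℝ + ‖v‖^2 := norm_add_sq_real u v
    have hexp : ∀ k : Fin (2*n), ⟪u + v, x k⟫_ℝ ^ 2
        = ⟪u, x k⟫_ℝ^2 + ⟪v, x k⟫_ℝ^2 + 2 * (⟪u, x k⟫_ℝ * ⟪v, x k⟫_ℝ) := by
      intro k; rw [inner_add_left]; ring
    rw [Finset.sum_congr rfl (fun k _ => hexp k), Finset.sum_add_distrib,
      Finset.sum_add_distrib, ← Finset.mul_sum, h2, h3, hnorm] at h1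
    linarith
  have hself : ∀ i, ⟪x i, x i⟫_ℝ = 1 := by
    intro i
    rw [real_inner_self_eq_norm_sq, hunit]; norm_num
  have hgram : ∀ i j, ∑ k, ⟪x i, x k⟫_ℝ * ⟪x j, x k⟫_ℝ = 2 * ⟪x i, x j⟫_ℝ :=
    fun i j => hbil (x i) (x j)
  set i0 : Fin (2*n) := ⟨0, by omega⟩ with hi0
  set i1 : Fin (2*n) := ⟨1, by omega⟩ with hi1
  have hne01 : i0 ≠ i1 := by simp [hi0, hi1, Fin.ext_iff]
  have hα0 : 0 ≤ α := by rw [← hequi i0 i1 hne01]; exact abs_nonneg _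
  -- α ≠ 0
  have hcard : (Finset.univ.erase i0).card = 2*n - 1 := by
    rw [Finset.card_erase_of_mem (Finset.mem_univ _), Finset.card_univ, Fintype.card_fin]
  have hαpos : 0 < α := by
    have h := hgram i0 i0
    rw [hself i0, mul_one] at h
    rw [← Finset.sum_erase_add _ _ (Finset.mem_univ i0), hself i0] at h
    have hc : ∑ k ∈ Finset.univ.erase i0, ⟪x i0, x k⟫_ℝ * ⟪x i0, x k⟫_ℝ
        = ∑ _k ∈ Finset.univ.erase i0, α^2 := by
      refine Finset.sum_congr rfl fun k hk => ?_
      have hk' : i0 ≠ k := fun h' => (Finset.mem_erase.mp hk).1 h'.symm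
      rw [← hequi i0 k hk', sq_abs]; ring
    rw [hc, Finset.sum_const, hcard, nsmul_eq_mul] at h
    rcases lt_or_eq_of_le hα0 with h' | h'
    · exact h'
    · exfalso
      rw [← h'] at h
      norm_num at h
  -- integer sign matrix
  set e : Fin (2*n) → Fin (2*n) → ℤ :=
    fun i j => if 0 < ⟪x i, x j⟫_ℝ then 1 else -1 with he
  have heval : ∀ i j, i ≠ j → ⟪x i, x j⟫_ℝ = α * (e i j : ℝ) := by
    intro i j hij
    have h := hequi i j hij
    have hee : e i j = if 0 < ⟪x i, x j⟫_ℝ then 1 else -1 := rfl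
    rcases (abs_eq hα0).mp h with h' | h'
    · have hpos : 0 < ⟪x i, x j⟫_ℝ := by rw [h']; exact hαpos
      rw [hee, if_pos hpos, h']; norm_num
    · have hneg : ¬ 0 < ⟪x i, x j⟫_ℝ := by rw [h']; linarith
      rw [hee, if_neg hneg, h']; push_cast; ring
  have hepm : ∀ i j, e i j = 1 ∨ e i j = -1 := by
    intro i j
    have hee : e i j = if 0 < ⟪x i, x j⟫_ℝ then 1 else -1 := rfl
    rw [hee]; split <;> simp
  have hesymm : ∀ i j, e i j = e j i := by
    intro i j; rw [he]; simp only [real_inner_comm]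
  -- row sums
  have hrow : ∀ i, i ≠ i0 →
      ∑ k ∈ (Finset.univ.erase i0).erase i, e i0 k * e i k = 0 := by
    intro i hi
    have h := hgram i i0
    rw [← Finset.sum_erase_add _ _ (Finset.mem_univ i0)] at h
    have hi' : i ∈ Finset.univ.erase i0 := Finset.mem_erase.mpr ⟨hi, Finset.mem_univ i⟩
    rw [← Finset.sum_erase_add _ _ hi'] at h
    rw [hself i, one_mul, hself i0, mul_one, real_inner_comm (x i0) (x i)] at h
    -- remaining sum = 0 in ℝ
    have hsum : ∑ k ∈ (Finset.univ.erase i0).erase i, ⟪x i, x k⟫_ℝ * ⟪x i0, x k⟫_ℝ = 0 := by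
      linarith
    have hterm : ∀ k ∈ (Finset.univ.erase i0).erase i,
        ⟪x i, x k⟫_ℝ * ⟪x i0, x k⟫_ℝ = α^2 * ((e i0 k * e i k : ℤ) : ℝ) := by
      intro k hk
      obtain ⟨hki, hk0⟩ := Finset.mem_erase.mp hk
      have hk0' := (Finset.mem_erase.mp hk0).1
      rw [heval i k (fun h' => hki h'.symm), heval i0 k (fun h' => hk0' h'.symm)]
      push_cast; ring
    rw [Finset.sum_congr rfl hterm, ← Finset.mul_sum] at hsum
    have hα2 : (α:ℝ)^2 ≠ 0 := pow_ne_zero _ (ne_of_gt hαpos)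
    have : ((∑ k ∈ (Finset.univ.erase i0).erase i, e i0 k * e i k : ℤ) : ℝ) = 0 := by
      push_cast at hsum ⊢
      rcases mul_eq_zero.mp hsum with h' | h'
      · exact absurd h' hα2
      · exact h'
    exact_mod_cast this
  -- combinatorics
  set V : Finset (Fin (2*n)) := Finset.univ.erase i0 with hV
  set f : Fin (2*n) → Fin (2*n) → ℤ := fun i k => e i0 i * (e i0 k * e i k) with hf
  have hfsymm : ∀ i k, f i k = f k i := by
    intro i k; rw [hf]; simp only; rw [hesymm i k]; ring
  have hfrow : ∀ i ∈ V, ∑ k ∈ V.erase i, f i k = 0 := by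
    intro i hi
    rw [hf]; simp only
    rw [← Finset.mul_sum, hrow i (Finset.mem_erase.mp hi).1, mul_zero]
  have hfpm : ∀ i k, f i k = 1 ∨ f i k = -1 := by
    intro i k
    rcases hepm i0 i with h1 | h1 <;> rcases hepm i0 k with h2 | h2 <;>
      rcases hepm i k with h3 | h3 <;> rw [hf] <;> simp [h1, h2, h3]
  -- split each row into lower and upper parts
  have hsplit : ∀ i ∈ V, ∑ k ∈ V.erase i, f i k
      = ∑ k ∈ V.filter (fun k => k < i), f i k + ∑ k ∈ V.filter (fun k => i < k), f i k := by
    intro i hi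
    rw [← Finset.sum_filter_add_sum_filter_not (V.erase i) (fun k => k < i)]
    congr 1
    · congr 1
      ext k; simp only [Finset.mem_filter, Finset.mem_erase]
      constructor
      · rintro ⟨⟨hne, hkV⟩, hlt⟩; exact ⟨hkV, hlt⟩
      · rintro ⟨hkV, hlt⟩; exact ⟨⟨ne_of_lt hlt, hkV⟩, hlt⟩
    · congr 1
      ext k; simp only [Finset.mem_filter, Finset.mem_erase, not_lt]
      constructor
      · rintro ⟨⟨hne, hkV⟩, hle⟩; exact ⟨hkV, lt_of_le_of_ne hle (Ne.symm hne)⟩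
      · rintro ⟨hkV, hlt⟩; exact ⟨⟨(ne_of_lt hlt).symm, hkV⟩, le_of_lt hlt⟩
  have hcomm : ∀ (g : Fin (2*n) → Fin (2*n) → ℤ),
      ∑ i ∈ V, ∑ k ∈ V.filter (fun k => k < i), g i k
      = ∑ k ∈ V, ∑ i ∈ V.filter (fun i => k < i), g i k := by
    intro g
    refine Finset.sum_comm' ?_
    intro i k
    simp only [Finset.mem_filter]
    tauto
  have hAB : ∑ i ∈ V, ∑ k ∈ V.filter (fun k => k < i), f i k
      = ∑ i ∈ V, ∑ k ∈ V.filter (fun k => i < k), f i k := by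
    rw [hcomm f]
    refine Finset.sum_congr rfl fun k _ => Finset.sum_congr rfl fun i _ => hfsymm i k
  have hB0 : ∑ i ∈ V, ∑ k ∈ V.filter (fun k => i < k), f i k = 0 := by
    have h0 : ∑ i ∈ V, ∑ k ∈ V.erase i, f i k = 0 :=
      Finset.sum_eq_zero hfrow
    rw [Finset.sum_congr rfl hsplit, Finset.sum_add_distrib, hAB] at h0
    linarith [h0]
  -- parity
  set N : ℕ := ∑ i ∈ V, (V.filter (fun k => i < k)).card with hN
  have hNeven : Even N := by
    have h2 : (2:ℤ) ∣ ((N:ℤ) - ∑ i ∈ V, ∑ k ∈ V.filter (fun k => i < k), f i k) := by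
      have : (N:ℤ) - ∑ i ∈ V, ∑ k ∈ V.filter (fun k => i < k), f i k
          = ∑ i ∈ V, ∑ k ∈ V.filter (fun k => i < k), (1 - f i k) := by
        rw [hN]
        push_cast
        rw [← Finset.sum_sub_distrib]
        refine Finset.sum_congr rfl fun i _ => ?_
        rw [Finset.sum_sub_distrib]
        congr 1
        simp
      rw [this]
      refine Finset.dvd_sum fun i _ => Finset.dvd_sum fun k _ => ?_
      rcases hfpm i k with h' | h' <;> rw [h'] <;> norm_num
    rw [hB0, sub_zero] at h2
    have h3 : (2:ℕ) ∣ N := by exact_mod_cast h2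
    obtain ⟨m, hm⟩ := h3
    exact ⟨m, by omega⟩
  -- compute 2 * N
  have hVcard : V.card = 2*n - 1 := hcard
  have h2N : 2 * N = (2*n-1) * (2*n-2) := by
    have hsum2 : ∑ i ∈ V, ((V.filter (fun k => k < i)).card
        + (V.filter (fun k => i < k)).card) = (2*n-1) * (2*n-2) := by
      have : ∀ i ∈ V, (V.filter (fun k => k < i)).card
          + (V.filter (fun k => i < k)).card = 2*n-2 := by
        intro i hi
        have hsplitc : (V.erase i).card = (V.filter (fun k => k < i)).card
            + (V.filter (fun k => i < k)).card := by
          rw [← Finset.card_filter_add_card_filter_not (s := V.erase i)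
            (p := fun k => k < i)]
          congr 1
          · congr 1
            ext k; simp only [Finset.mem_filter, Finset.mem_erase]
            constructor
            · rintro ⟨⟨hne, hkV⟩, hlt⟩; exact ⟨hkV, hlt⟩
            · rintro ⟨hkV, hlt⟩; exact ⟨⟨ne_of_lt hlt, hkV⟩, hlt⟩
          · congr 1
            ext k; simp only [Finset.mem_filter, Finset.mem_erase, not_lt]
            constructor
            · rintro ⟨⟨hne, hkV⟩, hle⟩; exact ⟨hkV, lt_of_le_of_ne hle (Ne.symm hne)⟩
            · rintro ⟨hkV, hlt⟩; exact ⟨⟨(ne_of_lt hlt).symm, hkV⟩, le_of_lt hlt⟩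
        rw [← hsplitc, Finset.card_erase_of_mem hi, hVcard]
        omega
      rw [Finset.sum_congr rfl this, Finset.sum_const, hVcard, smul_eq_mul]
    have hlower : ∑ i ∈ V, (V.filter (fun k => k < i)).card = N := by
      have := hcomm (fun _ _ => (1:ℤ))
      have hc : ∀ (W : Finset (Fin (2*n))) (g : Fin (2*n) → Finset (Fin (2*n))),
          ∑ i ∈ W, ((g i).card : ℤ) = ∑ i ∈ W, ∑ _k ∈ g i, (1:ℤ) := by
        intro W g; refine Finset.sum_congr rfl fun i _ => ?_; simp
      have hz : (∑ i ∈ V, ((V.filter (fun k => k < i)).card : ℤ))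
          = ∑ i ∈ V, ((V.filter (fun k => i < k)).card : ℤ) := by
        rw [hc V _, hc V _, this]
      have : ∑ i ∈ V, (V.filter (fun k => k < i)).card
          = ∑ i ∈ V, (V.filter (fun k => i < k)).card := by exact_mod_cast hz
      rw [this, hN]
    rw [Finset.sum_add_distrib, hlower, hN] at hsum2
    omega
  -- finish
  have hNval : N = (2*n-1) * (n-1) := by
    have : (2*n-1) * (2*n-2) = 2 * ((2*n-1) * (n-1)) := by
      have h1 : 2*n-2 = 2*(n-1) := by omega
      rw [h1]; ring
    omega
  rw [hNval] at hNeven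
  rcases Nat.even_mul.mp hNeven with h' | h'
  · exfalso; obtain ⟨t, ht⟩ := h'; omega
  · obtain ⟨t, ht⟩ := h'
    exact ⟨t, by omega⟩
end

section
/- Let B be a quasi-symmetric 2-(v, b, r, k, λ) design with intersection numbers x < y, where 2 ≤ k < v and b > v. Then x ≤ k²/v ≤ y (equivalently, x·v ≤ k² and k² ≤ y·v). -/
/-- For a quasi-symmetric 2-(v, b, r, k, λ) design with intersection numbers
`x < y`, where `2 ≤ k < v` and `b > v`, one has `x ≤ k²/v ≤ y`, i.e.
`x·v ≤ k²` and `k² ≤ y·v`. -/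
theorem stmt_19 {v b r k lam x y : ℕ}
    (B : Finset (Finset (Fin v)))
    (hb : B.card = b)
    (hblock : ∀ J ∈ B, J.card = k)
    (hr : ∀ p : Fin v, (B.filter (fun J => p ∈ J)).card = r)
    (hlam : ∀ p q : Fin v, p ≠ q → (B.filter (fun J => p ∈ J ∧ q ∈ J)).card = lam)
    (hxy : x < y)
    (hinter : ∀ J ∈ B, ∀ J' ∈ B, J ≠ J' →
      (J ∩ J').card = x ∨ (J ∩ J').card = y)
    (hk2 : 2 ≤ k) (hkv : k < v) (hbv : v < b) :
    x * v ≤ k ^ 2 ∧ k ^ 2 ≤ y * v := by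
  classical
  have hb0 : 0 < b := by omega
  have hBne : B.Nonempty := Finset.card_pos.mp (by omega)
  -- Per-block total intersection count
  have hsum_inter : ∀ J₀ ∈ B, ∑ J' ∈ B, (J₀ ∩ J').card = k * r := by
    intro J₀ hJ₀
    have h1 : ∀ J' : Finset (Fin v),
        (J₀ ∩ J').card = ∑ p ∈ J₀, if p ∈ J' then 1 else 0 := by
      intro J'
      rw [← Finset.card_filter, Finset.filter_mem_eq_inter]
    calc ∑ J' ∈ B, (J₀ ∩ J').card
        = ∑ J' ∈ B, ∑ p ∈ J₀, if p ∈ J' then 1 else 0 :=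
          Finset.sum_congr rfl fun J' _ => h1 J'
      _ = ∑ p ∈ J₀, ∑ J' ∈ B, if p ∈ J' then 1 else 0 := Finset.sum_comm
      _ = ∑ p ∈ J₀, r := Finset.sum_congr rfl fun p _ => by
          rw [← Finset.card_filter]; exact hr p
      _ = k * r := by rw [Finset.sum_const, hblock J₀ hJ₀, smul_eq_mul]
  -- Double counting incidences
  have hA : v * r = b * k := by
    have h2 : ∀ J : Finset (Fin v), ∑ p : Fin v, (if p ∈ J then 1 else 0) = J.card := by
      intro J
      rw [Finset.sum_ite_mem, Finset.univ_inter, Finset.sum_const, smul_eq_mul, mul_one]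
    calc v * r = ∑ _p : Fin v, r := by
          rw [Finset.sum_const, Finset.card_univ, Fintype.card_fin, smul_eq_mul]
      _ = ∑ p : Fin v, (B.filter (fun J => p ∈ J)).card :=
          (Finset.sum_congr rfl fun p _ => (hr p).symm)
      _ = ∑ p : Fin v, ∑ J ∈ B, if p ∈ J then 1 else 0 := by
          simp_rw [Finset.card_filter]
      _ = ∑ J ∈ B, ∑ p : Fin v, if p ∈ J then 1 else 0 := Finset.sum_comm
      _ = ∑ J ∈ B, J.card := Finset.sum_congr rfl fun J _ => h2 J
      _ = ∑ _J ∈ B, k := Finset.sum_congr rfl hblock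
      _ = b * k := by rw [Finset.sum_const, hb, smul_eq_mul]
  obtain ⟨J₀, hJ₀⟩ := hBne
  -- x side
  have hxside : x * v ≤ k ^ 2 := by
    have hdiag : (J₀ ∩ J₀).card = k := by rw [Finset.inter_self]; exact hblock J₀ hJ₀
    have herase : ∑ J' ∈ B.erase J₀, (J₀ ∩ J').card + k = k * r := by
      rw [← hsum_inter J₀ hJ₀, ← hdiag]
      exact Finset.sum_erase_add B _ hJ₀
    have hlow : (b - 1) * x ≤ ∑ J' ∈ B.erase J₀, (J₀ ∩ J').card := by
      have hcard : (B.erase J₀).card = b - 1 := by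
        rw [Finset.card_erase_of_mem hJ₀, hb]
      calc (b - 1) * x = (B.erase J₀).card • x := by rw [hcard, smul_eq_mul]
        _ ≤ _ := Finset.card_nsmul_le_sum _ _ _ (fun J' hJ' => by
            have hJ'B : J' ∈ B := Finset.mem_of_mem_erase hJ'
            have hne : J₀ ≠ J' := fun h => (Finset.mem_erase.mp hJ').1 h.symm
            rcases hinter J₀ hJ₀ J' hJ'B hne with h | h <;> omega)
    have hsum2 : (b - 1) * x + k ≤ k * r := by omega
    have hmul : ((b - 1) * x + k) * v ≤ b * (k * k) := by
      calc ((b - 1) * x + k) * v ≤ (k * r) * v := Nat.mul_le_mul_right v hsum2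
        _ = k * (v * r) := by ring
        _ = k * (b * k) := by rw [hA]
        _ = b * (k * k) := by ring
    have hkv' : k * k + k ≤ k * v := by
      calc k * k + k = k * (k + 1) := by ring
        _ ≤ k * v := Nat.mul_le_mul_left k hkv
    have hb1 : b = (b - 1) + 1 := by omega
    have hfin : (b - 1) * (x * v) ≤ (b - 1) * (k * k) := by nlinarith [hmul, hkv', hb1]
    have : x * v ≤ k * k := Nat.le_of_mul_le_mul_left hfin (by omega)
    calc x * v ≤ k * k := this
      _ = k ^ 2 := (sq k).symm
  -- y side
  have hyside : k ^ 2 ≤ y * v := by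
    haveI : Nonempty {J // J ∈ B} := by
      rcases Finset.card_pos.mp (hb ▸ hb0) with ⟨J, hJ⟩
      exact ⟨⟨J, hJ⟩⟩
    set β := {J // J ∈ B} with hβ
    have hcardβ : Fintype.card β = b := by rw [Fintype.card_coe, hb]
    set Mt : Matrix (Fin v) β ℚ := fun p J => if p ∈ J.1 then 1 else 0 with hMt
    -- kernel vector
    have hnotinj : ¬ Function.Injective Mt.mulVecLin := by
      intro hinj
      have hle := LinearMap.finrank_le_finrank_of_injective hinj
      rw [Module.finrank_fintype_fun_eq_card, Module.finrank_fintype_fun_eq_card,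
        hcardβ, Fintype.card_fin] at hle
      omega
    obtain ⟨a1, a2, hT12, hne12⟩ := Function.not_injective_iff.mp hnotinj
    set u : β → ℚ := a1 - a2 with hu
    have hu0 : u ≠ 0 := sub_ne_zero.mpr hne12
    have hTu : Mt.mulVec u = 0 := by
      have : Mt.mulVecLin u = 0 := by
        rw [hu, map_sub, hT12, sub_self]
      simpa [Matrix.mulVecLin_apply] using this
    have hker : ∀ p : Fin v, ∑ J' : β, (if p ∈ J'.1 then u J' else 0) = 0 := by
      intro p
      have h := congrFun hTu p
      simpa [Matrix.mulVec, dotProduct, hMt, boole_mul] using h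
    -- sum of u is zero
    have hsumu : ∑ J' : β, u J' = 0 := by
      have h0 : ∑ J' : β, ∑ p : Fin v, (if p ∈ J'.1 then u J' else 0) = 0 := by
        rw [Finset.sum_comm]
        simp [hker]
      have h1 : ∀ J' : β, ∑ p : Fin v, (if p ∈ J'.1 then u J' else 0) = (k : ℚ) * u J' := by
        intro J'
        rw [Finset.sum_ite_mem, Finset.univ_inter, Finset.sum_const,
          hblock J'.1 J'.2, nsmul_eq_mul]
      rw [Finset.sum_congr rfl fun J' _ => h1 J', ← Finset.mul_sum] at h0
      have hk0 : (k : ℚ) ≠ 0 := by positivity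
      exact (mul_eq_zero.mp h0).resolve_left hk0
    -- maximum entry
    obtain ⟨J₀m, _, hmax'⟩ := Finset.exists_max_image (Finset.univ : Finset β) u
      Finset.univ_nonempty
    have hmax : ∀ J' : β, u J' ≤ u J₀m := fun J' => hmax' J' (Finset.mem_univ _)
    set M := u J₀m with hM
    have hMpos : 0 < M := by
      by_contra h
      push_neg at h
      obtain ⟨J₁, hJ₁⟩ : ∃ a, u a ≠ 0 := Function.ne_iff.mp hu0
      have hJ₁neg : u J₁ < 0 := lt_of_le_of_ne (le_trans (hmax J₁) h) hJ₁
      have : ∑ J' : β, u J' < ∑ _J' : β, (0 : ℚ) :=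
        Finset.sum_lt_sum (fun i _ => le_trans (hmax i) h)
          ⟨J₁, Finset.mem_univ _, hJ₁neg⟩
      simp [hsumu] at this
    -- intersection cardinality as rational sum
    have hcQ : ∀ J' : β, ((J₀m.1 ∩ J'.1).card : ℚ)
        = ∑ p ∈ J₀m.1, if p ∈ J'.1 then (1 : ℚ) else 0 := by
      intro J'
      rw [Finset.sum_ite_mem, Finset.sum_const, nsmul_eq_mul, mul_one]
    -- weighted intersection identity
    have hzero : ∑ J' : β, ((J₀m.1 ∩ J'.1).card : ℚ) * u J' = 0 := by
      calc ∑ J' : β, ((J₀m.1 ∩ J'.1).card : ℚ) * u J'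
          = ∑ J' : β, ∑ p ∈ J₀m.1, (if p ∈ J'.1 then u J' else 0) := by
            refine Finset.sum_congr rfl fun J' _ => ?_
            rw [hcQ J', Finset.sum_mul]
            exact Finset.sum_congr rfl fun p _ => by rw [boole_mul]
        _ = ∑ p ∈ J₀m.1, ∑ J' : β, (if p ∈ J'.1 then u J' else 0) := Finset.sum_comm
        _ = 0 := by simp [hker]
    -- total intersection sum
    have hS : ∑ J' : β, ((J₀m.1 ∩ J'.1).card : ℚ) = (k : ℚ) * r := by
      have hN : ∑ J' ∈ B, (J₀m.1 ∩ J').card = k * r := hsum_inter J₀m.1 J₀m.2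
      calc ∑ J' : β, ((J₀m.1 ∩ J'.1).card : ℚ)
          = ((∑ J' ∈ B, (J₀m.1 ∩ J').card : ℕ) : ℚ) := by
            rw [Nat.cast_sum, Finset.sum_coe_sort B (fun J' => ((J₀m.1 ∩ J').card : ℚ))]
        _ = (k : ℚ) * r := by rw [hN]; push_cast; ring
    -- termwise bound
    have hterm : ∀ J' : β, (y : ℚ) * (u J' - M) ≤ ((J₀m.1 ∩ J'.1).card : ℚ) * (u J' - M) := by
      intro J'
      rcases eq_or_ne J' J₀m with rfl | hne
      · simp [hM]
      · have hne' : J₀m.1 ≠ J'.1 := fun h => hne (Subtype.ext h.symm)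
        have hle : ((J₀m.1 ∩ J'.1).card : ℚ) ≤ y := by
          rcases hinter J₀m.1 J₀m.2 J'.1 J'.2 hne' with h | h
          · rw [h]; exact_mod_cast hxy.le
          · rw [h]
        exact mul_le_mul_of_nonpos_right hle (sub_nonpos.mpr (hmax J'))
    have hsum1 : ∑ J' : β, ((J₀m.1 ∩ J'.1).card : ℚ) * (u J' - M) = -(M * ((k : ℚ) * r)) := by
      calc ∑ J' : β, ((J₀m.1 ∩ J'.1).card : ℚ) * (u J' - M)
          = ∑ J' : β, (((J₀m.1 ∩ J'.1).card : ℚ) * u J' - ((J₀m.1 ∩ J'.1).card : ℚ) * M) := by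
            simp [mul_sub]
        _ = (∑ J' : β, ((J₀m.1 ∩ J'.1).card : ℚ) * u J')
            - (∑ J' : β, ((J₀m.1 ∩ J'.1).card : ℚ)) * M := by
            rw [Finset.sum_sub_distrib, Finset.sum_mul]
        _ = 0 - ((k : ℚ) * r) * M := by rw [hzero, hS]
        _ = -(M * ((k : ℚ) * r)) := by ring
    have hsum2 : ∑ J' : β, (y : ℚ) * (u J' - M) = -((y : ℚ) * b * M) := by
      calc ∑ J' : β, (y : ℚ) * (u J' - M) = (y : ℚ) * ∑ J' : β, (u J' - M) := by
            rw [Finset.mul_sum]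
        _ = (y : ℚ) * ((∑ J' : β, u J') - (Fintype.card β : ℚ) * M) := by
            rw [Finset.sum_sub_distrib, Finset.sum_const, Finset.card_univ, nsmul_eq_mul]
        _ = -((y : ℚ) * b * M) := by rw [hsumu, hcardβ]; ring
    have hineq : -((y : ℚ) * b * M) ≤ -(M * ((k : ℚ) * r)) := by
      rw [← hsum1, ← hsum2]
      exact Finset.sum_le_sum fun i _ => hterm i
    have hkr_le : (k : ℚ) * r ≤ (y : ℚ) * b := by
      have h1 : M * ((k : ℚ) * r) ≤ M * ((y : ℚ) * b) := by linarith
      exact le_of_mul_le_mul_left h1 hMpos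
    have hkrN : k * r ≤ y * b := by exact_mod_cast hkr_le
    have hmulv : (k * r) * v ≤ (y * b) * v := Nat.mul_le_mul_right v hkrN
    have hcalc : b * (k * k) ≤ b * (y * v) := by
      calc b * (k * k) = k * (b * k) := by ring
        _ = k * (v * r) := by rw [hA]
        _ = (k * r) * v := by ring
        _ ≤ (y * b) * v := hmulv
        _ = b * (y * v) := by ring
    have : k * k ≤ y * v := Nat.le_of_mul_le_mul_left hcalc hb0
    calc k ^ 2 = k * k := sq k
      _ ≤ y * v := this
  exact ⟨hxside, hyside⟩
end
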